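/- Prescribed convergence of restarted block GMRES: Let p, M, ℓ ≥ 1 and n = ℓMp. Let {F_j^(k)} (j = 0,…,M−1; k = 1,…,ℓ) be upper triangular p×p matrices with positive real diagonal entries satisfying F₀^(1) ≥ F₁^(1) ≥ ⋯ ≥ F_{M−1}^(1) > F₀^(2) ≥ ⋯ ≥ F_{M−1}^(ℓ−1) > F₀^(ℓ) ≥ ⋯ ≥ F_{M−1}^(ℓ), where F ≥ G means F*F − G*G is positive semidefinite and F > G means F*F − G*G is positive definite (strictly decreasing transitions between consecutive restart cycles). Then there exist a matrix A ∈ ℂ^{n×n} and a right-hand side B ∈ ℂ^{n×p} such that restarted block GMRES with cycle length M applied to AX = B with zero initial guess produces block residuals satisfying (R_j^(k))* R_j^(k) = (F_j^(k))* F_j^(k) for all j = 0,…,M−1 and k = 1,…,ℓ. -/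

import Mathlib

open Matrix ComplexOrder

noncomputable def frobNorm {n q : ℕ} (M : Matrix (Fin n) (Fin q) ℂ) : ℝ :=
  Real.sqrt (∑ i, ∑ c, ‖M i c‖ ^ 2)

noncomputable def blockKrylov {n p : ℕ} (A : Matrix (Fin n) (Fin n) ℂ)
    (R0 : Matrix (Fin n) (Fin p) ℂ) (j : ℕ) : Submodule ℂ (Fin n → ℂ) :=
  Submodule.span ℂ {v | ∃ i : ℕ, i < j ∧ ∃ c : Fin p, v = fun r => ((A ^ i) * R0) r c}

def colsIn {n p : ℕ} (S : Submodule ℂ (Fin n → ℂ)) (X : Matrix (Fin n) (Fin p) ℂ) : Prop :=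
  ∀ c : Fin p, (fun i => X i c) ∈ S

def IsBlockGMRESResidual {n p : ℕ} (A : Matrix (Fin n) (Fin n) ℂ)
    (R0 : Matrix (Fin n) (Fin p) ℂ) (j : ℕ) (R : Matrix (Fin n) (Fin p) ℂ) : Prop :=
  (∃ X : Matrix (Fin n) (Fin p) ℂ, colsIn (blockKrylov A R0 j) X ∧ R = R0 - A * X) ∧
  ∀ X' : Matrix (Fin n) (Fin p) ℂ, colsIn (blockKrylov A R0 j) X' →
    frobNorm R ≤ frobNorm (R0 - A * X')

namespace BGMRES

lemma col_mul {n m p : ℕ} (A : Matrix (Fin n) (Fin m) ℂ) (B : Matrix (Fin m) (Fin p) ℂ)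
    (c : Fin p) : (fun i => (A * B) i c) = A.mulVec (fun i => B i c) := by
  funext r
  simp [Matrix.mul_apply, Matrix.mulVec, dotProduct]

/-- frobNorm as sum over columns -/
lemma frobNorm_eq {n q : ℕ} (M : Matrix (Fin n) (Fin q) ℂ) :
    frobNorm M = Real.sqrt (∑ c, ∑ i, Complex.normSq (M i c)) := by
  rw [frobNorm, Finset.sum_comm]
  congr 1
  refine Finset.sum_congr rfl fun c _ => Finset.sum_congr rfl fun i _ => ?_
  rw [Complex.sq_norm]

/-- Pythagoras-flavored minimality criterion. -/
lemma isBlockGMRESResidual_of_orth {n p : ℕ} (A : Matrix (Fin n) (Fin n) ℂ)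
    (R0 R : Matrix (Fin n) (Fin p) ℂ) (j : ℕ) (U : Submodule ℂ (Fin n → ℂ))
    (hX : ∃ X : Matrix (Fin n) (Fin p) ℂ, colsIn (blockKrylov A R0 j) X ∧ R = R0 - A * X)
    (hmap : ∀ v ∈ blockKrylov A R0 j, A.mulVec v ∈ U)
    (horth : ∀ c : Fin p, ∀ u ∈ U, ∑ i, (starRingEnd ℂ) (R i c) * u i = 0) :
    IsBlockGMRESResidual A R0 j R := by
  refine ⟨hX, fun X' hX' => ?_⟩
  obtain ⟨X, hXmem, hR⟩ := hX
  rw [frobNorm_eq, frobNorm_eq]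
  apply Real.sqrt_le_sqrt
  apply Finset.sum_le_sum
  intro c _
  set u : Fin n → ℂ := A.mulVec (fun i => (X - X') i c) with hu
  have humem : u ∈ U := by
    apply hmap
    have : (fun i => (X - X') i c) ∈ blockKrylov A R0 j :=
      Submodule.sub_mem _ (hXmem c) (hX' c)
    exact this
  have hdecomp : ∀ i, (R0 - A * X') i c = R i c + u i := by
    intro i
    have : R0 - A * X' = R + A * (X - X') := by
      rw [hR, Matrix.mul_sub]; abel
    rw [this]
    rw [Matrix.add_apply, hu, ← col_mul]
  have hsum : ∑ i, (starRingEnd ℂ) (R i c) * u i = 0 := horth c u humem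
  calc ∑ i, Complex.normSq (R i c)
      ≤ ∑ i, Complex.normSq (R i c) + ∑ i, Complex.normSq (u i) := by
        have : (0:ℝ) ≤ ∑ i, Complex.normSq (u i) :=
          Finset.sum_nonneg fun i _ => Complex.normSq_nonneg _
        linarith
    _ = ∑ i, Complex.normSq ((R0 - A * X') i c) := by
        simp_rw [hdecomp, Complex.normSq_add]
        rw [Finset.sum_add_distrib, Finset.sum_add_distrib]
        have : ∑ i, 2 * (R i c * (starRingEnd ℂ) (u i)).re = 0 := by
          rw [← Finset.mul_sum, ← Complex.re_sum]
          have : ∑ i, R i c * (starRingEnd ℂ) (u i)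
              = (starRingEnd ℂ) (∑ i, (starRingEnd ℂ) (R i c) * u i) := by
            rw [map_sum]
            refine Finset.sum_congr rfl fun i _ => ?_
            simp [mul_comm]
          rw [this, hsum]
          simp
        rw [this, add_zero]

/-- Existence of a block GMRES residual, via orthogonal projection. -/
lemma exists_residual {n p : ℕ} (A : Matrix (Fin n) (Fin n) ℂ)
    (R0 : Matrix (Fin n) (Fin p) ℂ) (j : ℕ) :
    ∃ R : Matrix (Fin n) (Fin p) ℂ, IsBlockGMRESResidual A R0 j R := by
  classical
  set K := blockKrylov A R0 j with hK
  set U : Submodule ℂ (Fin n → ℂ) := Submodule.map A.mulVecLin K with hU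
  let e : EuclideanSpace ℂ (Fin n) ≃ₗ[ℂ] (Fin n → ℂ) := WithLp.linearEquiv 2 ℂ (Fin n → ℂ)
  set U' : Submodule ℂ (EuclideanSpace ℂ (Fin n)) := U.comap e.toLinearMap with hU'
  have proj : ∀ c : Fin p, ∃ x : Fin n → ℂ, x ∈ K ∧
      ∀ u ∈ U, ∑ i, (starRingEnd ℂ) (R0 i c - A.mulVec x i) * u i = 0 := by
    intro c
    set v : EuclideanSpace ℂ (Fin n) := e.symm (fun i => R0 i c) with hv
    set w : EuclideanSpace ℂ (Fin n) := (U'.orthogonalProjectionOnto v : EuclideanSpace ℂ (Fin n))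
      with hw
    have hwU : e w ∈ U := (U'.orthogonalProjectionOnto v).2
    obtain ⟨x, hxK, hxw⟩ := hwU
    refine ⟨x, hxK, fun u hu => ?_⟩
    have hr : v - w ∈ U'ᗮ := Submodule.sub_starProjection_mem_orthogonal (K := U') v
    have hu' : e.symm u ∈ U' := by simpa [hU'] using hu
    have h0 : (inner ℂ (e.symm u) (v - w) : ℂ) = 0 :=
      (Submodule.mem_orthogonal U' (v - w)).mp hr (e.symm u) hu'
    have h1 : ∑ i, (starRingEnd ℂ) (u i) * (R0 i c - A.mulVec x i) = 0 := by
      rw [← h0, PiLp.inner_apply]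
      refine Finset.sum_congr rfl fun i _ => ?_
      have : (v - w) i = R0 i c - A.mulVec x i := by
        have hxw' : A.mulVec x = e w := by
          rw [← hxw]; rfl
        have : e (v - w) = (fun i => R0 i c) - A.mulVec x := by
          rw [map_sub, hxw']
          congr 1
        calc (v - w) i = (e (v - w)) i := rfl
          _ = R0 i c - A.mulVec x i := by rw [this]; rfl
      rw [this, RCLike.inner_apply']
      rfl
    calc ∑ i, (starRingEnd ℂ) (R0 i c - A.mulVec x i) * u i
        = (starRingEnd ℂ) (∑ i, (starRingEnd ℂ) (u i) * (R0 i c - A.mulVec x i)) := by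
          rw [map_sum]
          refine Finset.sum_congr rfl fun i _ => ?_
          simp [mul_comm]
      _ = 0 := by rw [h1]; simp
  choose xf hxfK hxforth using proj
  set X : Matrix (Fin n) (Fin p) ℂ := fun i c => xf c i with hXdef
  refine ⟨R0 - A * X, ?_⟩
  apply isBlockGMRESResidual_of_orth A R0 _ j U
  · exact ⟨X, fun c => hxfK c, rfl⟩
  · intro v hv
    exact ⟨v, hv, rfl⟩
  · intro c u hu
    have := hxforth c u hu
    exact this

lemma sum_ind (n a b : ℕ) :
    ∑ r : Fin n, (if (r:ℕ) = a then (1:ℂ) else 0) * (if (r:ℕ) = b then 1 else 0)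
      = if a = b ∧ a < n then 1 else 0 := by
  classical
  by_cases hab : a = b
  · subst hab
    by_cases han : a < n
    · rw [if_pos ⟨rfl, han⟩]
      rw [Finset.sum_eq_single (⟨a, han⟩ : Fin n)]
      · simp
      · intro r _ hr
        have : (r:ℕ) ≠ a := fun h => hr (Fin.ext h)
        simp [this]
      · simp
    · rw [if_neg (fun h => han h.2)]
      apply Finset.sum_eq_zero
      intro r _
      have : (r:ℕ) ≠ a := fun h => han (h ▸ r.isLt)
      simp [this]
  · rw [if_neg (fun h => hab h.1)]
    apply Finset.sum_eq_zero
    intro r _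
    by_cases h1 : (r:ℕ) = a
    · have : (r:ℕ) ≠ b := fun h => hab (h1 ▸ h ▸ rfl)
      simp [this]
    · simp [h1]

/-- The `t`-th block of `p` standard basis columns. -/
def EB (p n : ℕ) (t : ℕ) : Matrix (Fin n) (Fin p) ℂ :=
  fun r c => if (r:ℕ) = (c:ℕ) + t * p then 1 else 0

lemma EB_zero (p N : ℕ) (t : ℕ) (ht : N ≤ t) : EB p (N*p) t = 0 := by
  funext r c
  have : (r:ℕ) ≠ (c:ℕ) + t * p := by
    intro h
    have h1 : (r:ℕ) < N * p := r.isLt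
    have h2 : N * p ≤ t * p := Nat.mul_le_mul_right p ht
    omega
  simp [EB, this]

lemma EB_orth (p N : ℕ) (t t' : ℕ) :
    (EB p (N*p) t)ᴴ * EB p (N*p) t'
      = if t = t' ∧ t < N then (1 : Matrix (Fin p) (Fin p) ℂ) else 0 := by
  classical
  funext d c
  have hp : 0 < p := d.pos
  rw [Matrix.mul_apply]
  have : ∀ r : Fin (N*p), (EB p (N*p) t)ᴴ d r * EB p (N*p) t' r c
      = (if (r:ℕ) = (d:ℕ) + t*p then (1:ℂ) else 0) * (if (r:ℕ) = (c:ℕ) + t'*p then 1 else 0) := by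
    intro r
    rw [Matrix.conjTranspose_apply]
    unfold EB
    rw [apply_ite star]
    norm_num
  rw [Finset.sum_congr rfl (fun r _ => this r), sum_ind]
  have key : ((d:ℕ) + t*p = (c:ℕ) + t'*p ∧ (d:ℕ) + t*p < N*p)
      ↔ (t = t' ∧ t < N ∧ (d:ℕ) = (c:ℕ)) := by
    constructor
    · rintro ⟨h1, h2⟩
      have hd : ((d:ℕ) + t*p) % p = (d:ℕ) := by
        rw [Nat.add_mul_mod_self_right, Nat.mod_eq_of_lt d.isLt]
      have hc : ((c:ℕ) + t'*p) % p = (c:ℕ) := by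
        rw [Nat.add_mul_mod_self_right, Nat.mod_eq_of_lt c.isLt]
      have hdc : (d:ℕ) = (c:ℕ) := by rw [← hd, ← hc, h1]
      have htt : t = t' := by
        have := h1
        rw [hdc] at this
        have := Nat.add_left_cancel this
        exact Nat.eq_of_mul_eq_mul_right hp this
      refine ⟨htt, ?_, hdc⟩
      by_contra hN
      push_neg at hN
      have : N * p ≤ t * p := Nat.mul_le_mul_right p hN
      omega
    · rintro ⟨rfl, hN, hdc⟩
      constructor
      · rw [hdc]
      · have h1 : (d:ℕ) + t*p < p + t*p := by
          have := d.isLt; omega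
        have h2 : p + t*p = (t+1)*p := by ring
        have h3 : (t+1)*p ≤ N*p := Nat.mul_le_mul_right p hN
        omega
  have hfin : ((d:ℕ) + t*p = (c:ℕ) + t'*p ∧ (d:ℕ) + t*p < N*p) ↔ (t = t' ∧ t < N) ∧ d = c := by
    rw [key]
    constructor
    · rintro ⟨h1, h2, h3⟩; exact ⟨⟨h1, h2⟩, Fin.ext h3⟩
    · rintro ⟨⟨h1, h2⟩, rfl⟩; exact ⟨h1, h2, rfl⟩
  by_cases h : t = t' ∧ t < N
  · rw [if_pos h, Matrix.one_apply]
    by_cases hdc : d = c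
    · rw [if_pos (hfin.mpr ⟨h, hdc⟩), if_pos hdc]
    · rw [if_neg (fun hc => hdc (hfin.mp hc).2), if_neg hdc]
  · rw [if_neg h, Matrix.zero_apply, if_neg (fun hc => h (hfin.mp hc).1)]

open scoped Classical MatrixOrder in
noncomputable def psqrt {p : ℕ} (D : Matrix (Fin p) (Fin p) ℂ) : Matrix (Fin p) (Fin p) ℂ :=
  if h : D.PosSemidef then CFC.sqrt D else 0

open scoped MatrixOrder in
lemma psqrt_mul_self {p : ℕ} {D : Matrix (Fin p) (Fin p) ℂ} (h : D.PosSemidef) :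
    psqrt D * psqrt D = D := by
  unfold psqrt
  rw [dif_pos h]
  exact CFC.sqrt_mul_sqrt_self D h.nonneg

open scoped MatrixOrder in
lemma psqrt_herm {p : ℕ} {D : Matrix (Fin p) (Fin p) ℂ} (h : D.PosSemidef) :
    (psqrt D)ᴴ = psqrt D := by
  unfold psqrt
  rw [dif_pos h]
  exact (CFC.sqrt_nonneg D).posSemidef.1

section Main

variable (p M ℓ : ℕ) (F : ℕ → ℕ → Matrix (Fin p) (Fin p) ℂ)

noncomputable def Hm (t : ℕ) : Matrix (Fin p) (Fin p) ℂ :=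
  if t < ℓ*M then (F (t/M) (t%M))ᴴ * F (t/M) (t%M) else 0

noncomputable def Gm (t : ℕ) : Matrix (Fin p) (Fin p) ℂ :=
  psqrt (Hm p M ℓ F t - Hm p M ℓ F (t+1))

noncomputable def Rf (s : ℕ) : Matrix (Fin (ℓ*M*p)) (Fin p) ℂ :=
  ∑ t ∈ Finset.Ico s (ℓ*M), EB p (ℓ*M*p) t * Gm p M ℓ F t

noncomputable def Phi (t : ℕ) : Matrix (Fin (ℓ*M*p)) (Fin p) ℂ :=
  if t % M = M - 1 then
    (EB p (ℓ*M*p) (t/M*M) - EB p (ℓ*M*p) (t+1)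
      - ∑ i ∈ Finset.range (M-1), EB p (ℓ*M*p) (t/M*M+i+1) * Gm p M ℓ F (t/M*M+i))
      * (Gm p M ℓ F t)⁻¹
  else EB p (ℓ*M*p) (t+1)

noncomputable def Amat : Matrix (Fin (ℓ*M*p)) (Fin (ℓ*M*p)) ℂ :=
  ∑ t ∈ Finset.range (ℓ*M), Phi p M ℓ F t * (EB p (ℓ*M*p) t)ᴴ

lemma EBH_Rf (t s : ℕ) (hts : t < s) :
    (EB p (ℓ*M*p) t)ᴴ * Rf p M ℓ F s = 0 := by
  rw [Rf, Matrix.mul_sum]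
  apply Finset.sum_eq_zero
  intro t' ht'
  rw [← Matrix.mul_assoc, EB_orth, if_neg, Matrix.zero_mul]
  rintro ⟨rfl, -⟩
  exact absurd (Finset.mem_Ico.mp ht').1 (by omega)

lemma Gram (hD : ∀ t < ℓ*M, (Hm p M ℓ F t - Hm p M ℓ F (t+1)).PosSemidef) :
    ∀ d s, ℓ*M ≤ s + d → (Rf p M ℓ F s)ᴴ * Rf p M ℓ F s = Hm p M ℓ F s := by
  intro d
  induction d with
  | zero =>
    intro s hs
    rw [Rf, Finset.Ico_eq_empty (by omega), Finset.sum_empty, Hm, if_neg (by omega)]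
    simp
  | succ d IH =>
    intro s hs
    by_cases hsN : ℓ*M ≤ s
    · exact IH s (by omega)
    · push_neg at hsN
      have hsplit : Rf p M ℓ F s
          = EB p (ℓ*M*p) s * Gm p M ℓ F s + Rf p M ℓ F (s+1) := by
        rw [Rf, Rf, Finset.sum_eq_sum_Ico_succ_bot hsN]
      have hcross : (EB p (ℓ*M*p) s * Gm p M ℓ F s)ᴴ * Rf p M ℓ F (s+1) = 0 := by
        rw [Matrix.conjTranspose_mul, Matrix.mul_assoc, EBH_Rf p M ℓ F s (s+1) (by omega),
          Matrix.mul_zero]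
      have hcross' : (Rf p M ℓ F (s+1))ᴴ * (EB p (ℓ*M*p) s * Gm p M ℓ F s) = 0 := by
        have := congrArg Matrix.conjTranspose hcross
        rwa [Matrix.conjTranspose_mul, Matrix.conjTranspose_conjTranspose,
          Matrix.conjTranspose_zero] at this
      have hdiag : (EB p (ℓ*M*p) s * Gm p M ℓ F s)ᴴ * (EB p (ℓ*M*p) s * Gm p M ℓ F s)
          = Hm p M ℓ F s - Hm p M ℓ F (s+1) := by
        rw [Matrix.conjTranspose_mul, Matrix.mul_assoc, ← Matrix.mul_assoc (EB p (ℓ*M*p) s)ᴴ,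
          EB_orth, if_pos ⟨rfl, hsN⟩, Matrix.one_mul, Gm, psqrt_herm (hD s hsN),
          psqrt_mul_self (hD s hsN)]
      rw [hsplit, Matrix.conjTranspose_add, Matrix.add_mul, Matrix.mul_add, Matrix.mul_add,
        hdiag, hcross, hcross', IH (s+1) (by omega)]
      abel

lemma A_on_EB (s : ℕ) (hs : s < ℓ*M) :
    Amat p M ℓ F * EB p (ℓ*M*p) s = Phi p M ℓ F s := by
  rw [Amat, Matrix.sum_mul]
  rw [Finset.sum_eq_single s]
  · rw [Matrix.mul_assoc, EB_orth, if_pos ⟨rfl, hs⟩, Matrix.mul_one]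
  · intro t _ hts
    rw [Matrix.mul_assoc, EB_orth, if_neg (fun h => hts h.1), Matrix.mul_zero]
  · intro h
    exact absurd (Finset.mem_range.mpr hs) h

lemma mod_helper {M : ℕ} (k i : ℕ) (h : i < M) : (k*M+i) % M = i := by
  rw [add_comm, Nat.add_mul_mod_self_right, Nat.mod_eq_of_lt h]

lemma div_helper {M : ℕ} (k i : ℕ) (h : i < M) : (k*M+i) / M = k := by
  rw [add_comm, Nat.add_mul_div_right _ _ (by omega : 0 < M), Nat.div_eq_of_lt h, zero_add]

lemma cycSum (hM : 1 ≤ M)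
    (hGu : ∀ t < ℓ*M, t % M = M - 1 → IsUnit (Gm p M ℓ F t).det) :
    ∀ d k, ℓ ≤ k + d →
      ∑ t ∈ Finset.Ico (k*M) (ℓ*M), Phi p M ℓ F t * Gm p M ℓ F t = EB p (ℓ*M*p) (k*M) := by
  intro d
  induction d with
  | zero =>
    intro k hk
    have hkM : ℓ*M ≤ k*M := Nat.mul_le_mul_right M (by omega)
    rw [Finset.Ico_eq_empty (by omega), Finset.sum_empty, EB_zero p (ℓ*M) _ hkM]
  | succ d IH =>
    intro k hk
    by_cases hkl : ℓ ≤ k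
    · have hkM : ℓ*M ≤ k*M := Nat.mul_le_mul_right M hkl
      rw [Finset.Ico_eq_empty (by omega), Finset.sum_empty, EB_zero p (ℓ*M) _ hkM]
    · push_neg at hkl
      have h1 : k*M ≤ k*M+M := by omega
      have h2 : k*M+M ≤ ℓ*M := by
        have e1 : (k+1)*M = k*M+M := by ring
        have := Nat.mul_le_mul_right M (show k+1 ≤ ℓ by omega)
        omega
      rw [← Finset.sum_Ico_consecutive _ h1 h2]
      have hIH : ∑ t ∈ Finset.Ico (k*M+M) (ℓ*M), Phi p M ℓ F t * Gm p M ℓ F t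
          = EB p (ℓ*M*p) (k*M+M) := by
        have h3 : k*M+M = (k+1)*M := by ring
        rw [h3]
        exact IH (k+1) (by omega)
      rw [hIH]
      -- first interval
      have hfirst : ∑ t ∈ Finset.Ico (k*M) (k*M+M), Phi p M ℓ F t * Gm p M ℓ F t
          = EB p (ℓ*M*p) (k*M) - EB p (ℓ*M*p) (k*M+M) := by
        rw [Finset.sum_Ico_eq_sum_range]
        have hM' : k*M+M-(k*M) = M := by omega
        rw [hM']
        obtain ⟨M', rfl⟩ : ∃ M', M = M' + 1 := ⟨M - 1, by omega⟩
        rw [Finset.sum_range_succ]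
        have hlast : Phi p (M'+1) ℓ F (k*(M'+1)+M')
            = (EB p (ℓ*(M'+1)*p) (k*(M'+1)) - EB p (ℓ*(M'+1)*p) (k*(M'+1)+M'+1)
              - ∑ i ∈ Finset.range M',
                  EB p (ℓ*(M'+1)*p) (k*(M'+1)+i+1) * Gm p (M'+1) ℓ F (k*(M'+1)+i))
              * (Gm p (M'+1) ℓ F (k*(M'+1)+M'))⁻¹ := by
          rw [Phi, if_pos]
          · rw [div_helper k M' (by omega)]
            norm_num
          · rw [mod_helper k M' (by omega)]
            omega
        have hothers : ∀ i ∈ Finset.range M',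
            Phi p (M'+1) ℓ F (k*(M'+1)+i) * Gm p (M'+1) ℓ F (k*(M'+1)+i)
            = EB p (ℓ*(M'+1)*p) (k*(M'+1)+i+1) * Gm p (M'+1) ℓ F (k*(M'+1)+i) := by
          intro i hi
          have hi' := Finset.mem_range.mp hi
          have hmod : (k*(M'+1)+i) % (M'+1) = i := mod_helper k i (by omega)
          rw [Phi, if_neg (by rw [hmod]; omega)]
        rw [Finset.sum_congr rfl hothers, hlast, Matrix.mul_assoc,
          Matrix.nonsing_inv_mul _ (hGu _ ?hlt ?hmod), Matrix.mul_one]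
        case hlt =>
          have e1 : (k+1)*(M'+1) = k*(M'+1)+M'+1 := by ring
          have h4 : (k+1)*(M'+1) ≤ ℓ*(M'+1) := Nat.mul_le_mul_right _ (by omega)
          omega
        case hmod =>
          rw [mod_helper k M' (by omega)]
          omega
        have e2 : k*(M'+1)+M'+1 = k*(M'+1)+(M'+1) := by omega
        rw [e2]
        abel
      rw [hfirst]
      abel

lemma A_Rf (hM : 1 ≤ M)
    (hGu : ∀ t < ℓ*M, t % M = M - 1 → IsUnit (Gm p M ℓ F t).det) (k : ℕ) :
    Amat p M ℓ F * Rf p M ℓ F (k*M) = EB p (ℓ*M*p) (k*M) := by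
  rw [Rf, Matrix.mul_sum]
  have : ∀ t ∈ Finset.Ico (k*M) (ℓ*M),
      Amat p M ℓ F * (EB p (ℓ*M*p) t * Gm p M ℓ F t) = Phi p M ℓ F t * Gm p M ℓ F t := by
    intro t ht
    rw [← Matrix.mul_assoc, A_on_EB p M ℓ F t (Finset.mem_Ico.mp ht).2]
  rw [Finset.sum_congr rfl this]
  exact cycSum p M ℓ F hM hGu ℓ k (by omega)

lemma A_pow (hM : 1 ≤ M)
    (hGu : ∀ t < ℓ*M, t % M = M - 1 → IsUnit (Gm p M ℓ F t).det)
    (k : ℕ) (hk : k < ℓ) :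
    ∀ i, 1 ≤ i → i ≤ M →
      (Amat p M ℓ F)^i * Rf p M ℓ F (k*M) = EB p (ℓ*M*p) (k*M+(i-1)) := by
  intro i
  induction i with
  | zero => omega
  | succ i IH =>
    intro _ hiM
    by_cases hi0 : i = 0
    · subst hi0
      rw [pow_one, A_Rf p M ℓ F hM hGu k]
      norm_num
    · have h1 : 1 ≤ i := by omega
      have h2 : i ≤ M := by omega
      rw [pow_succ', Matrix.mul_assoc, IH h1 h2]
      have hlt : k*M+(i-1) < ℓ*M := by
        have e1 : (k+1)*M = k*M+M := by ring
        have := Nat.mul_le_mul_right M (show k+1 ≤ ℓ by omega)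
        omega
      rw [A_on_EB p M ℓ F _ hlt, Phi, if_neg]
      · have e3 : k*M+(i-1)+1 = k*M+(i+1-1) := by omega
        rw [e3]
      · rw [mod_helper k (i-1) (by omega)]
        omega

lemma posDef_of_posSemidef_isUnit_det {q : ℕ} {D : Matrix (Fin q) (Fin q) ℂ}
    (hD : D.PosSemidef) (h : IsUnit D.det) : D.PosDef := by
  refine posDef_iff_dotProduct_mulVec.mpr ⟨hD.1, fun x hx => ?_⟩
  rcases lt_or_eq_of_le (hD.dotProduct_mulVec_nonneg x) with hlt | heq
  · exact hlt
  · exfalso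
    have hDx : D *ᵥ x = 0 := (hD.dotProduct_mulVec_zero_iff x).mp heq.symm
    have hinj : Function.Injective D.mulVec :=
      Matrix.mulVec_injective_iff_isUnit.mpr ((Matrix.isUnit_iff_isUnit_det D).mpr h)
    exact hx (hinj (by simpa using hDx))

lemma col_mul_mem {n q p : ℕ} (S : Submodule ℂ (Fin n → ℂ)) (B : Matrix (Fin n) (Fin q) ℂ)
    (Q : Matrix (Fin q) (Fin p) ℂ) (hB : ∀ d, (fun i => B i d) ∈ S) (c : Fin p) :
    (fun i => (B * Q) i c) ∈ S := by
  have : (fun i => (B * Q) i c) = ∑ d, Q d c • (fun i => B i d) := by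
    funext i
    simp [Matrix.mul_apply, Finset.sum_apply, mul_comm]
  rw [this]
  exact Submodule.sum_mem S fun d _ => Submodule.smul_mem S _ (hB d)

lemma col_sum_mem {n p : ℕ} {ι : Type*} (S : Submodule ℂ (Fin n → ℂ)) (s : Finset ι)
    (f : ι → Matrix (Fin n) (Fin p) ℂ) (c : Fin p)
    (h : ∀ t ∈ s, (fun i => f t i c) ∈ S) :
    (fun i => (∑ t ∈ s, f t) i c) ∈ S := by
  have : (fun i => (∑ t ∈ s, f t) i c) = ∑ t ∈ s, (fun i => f t i c) := by
    funext i
    simp only [Finset.sum_apply, Matrix.sum_apply]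
  rw [this]
  exact Submodule.sum_mem S h

end Main

end BGMRES

/-- **Prescribed convergence of restarted block GMRES.**
Given upper triangular `p×p` matrices `F k j` with positive real diagonal entries
(cycles `k = 0, …, ℓ-1`, steps `j = 0, …, M-1`), non-increasing within each cycle and strictly
decreasing at the transitions between consecutive cycles (in the Loewner sense on `F^*F`),
there exist `A ∈ ℂ^{n×n}` and `B ∈ ℂ^{n×p}` (`n = ℓ M p`) such that restarted block GMRES with
cycle length `M` applied to `A X = B` with zero initial guess produces block residuals with
`(R k j)^* (R k j) = (F k j)^* (F k j)`. -/
theorem prescribed_restarted_block_gmres_convergence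
    (p M ℓ : ℕ) (hp : 1 ≤ p) (hM : 1 ≤ M) (hl : 1 ≤ ℓ)
    (F : ℕ → ℕ → Matrix (Fin p) (Fin p) ℂ)
    (hFtri : ∀ k < ℓ, ∀ j < M, ∀ a b : Fin p, (b : ℕ) < (a : ℕ) → F k j a b = 0)
    (hFpos : ∀ k < ℓ, ∀ j < M, ∀ a : Fin p, 0 < (F k j a a).re ∧ (F k j a a).im = 0)
    (hmono : ∀ k < ℓ, ∀ j : ℕ, j + 1 < M →
      ((F k j)ᴴ * F k j - (F k (j + 1))ᴴ * F k (j + 1)).PosSemidef)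
    (htrans : ∀ k : ℕ, k + 1 < ℓ →
      ((F k (M - 1))ᴴ * F k (M - 1) - (F (k + 1) 0)ᴴ * F (k + 1) 0).PosDef) :
    ∃ (A : Matrix (Fin (ℓ * M * p)) (Fin (ℓ * M * p)) ℂ)
      (B : Matrix (Fin (ℓ * M * p)) (Fin p) ℂ)
      (R : ℕ → ℕ → Matrix (Fin (ℓ * M * p)) (Fin p) ℂ)
      (Rstart : ℕ → Matrix (Fin (ℓ * M * p)) (Fin p) ℂ),
      Rstart 0 = B ∧
      (∀ k j : ℕ, IsBlockGMRESResidual A (Rstart k) j (R k j)) ∧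
      (∀ k : ℕ, Rstart (k + 1) = R k M) ∧
      (∀ k < ℓ, ∀ j < M, (R k j)ᴴ * R k j = (F k j)ᴴ * F k j) := by
  classical
  open BGMRES in
  have hMl : ∀ k, k < ℓ → ∀ i, i < M → k*M+i < ℓ*M := by
    intro k hk i hi
    have e1 : (k+1)*M = k*M+M := by ring
    have := Nat.mul_le_mul_right M (show k+1 ≤ ℓ by omega)
    omega
  have hMl' : ∀ k, k < ℓ → k*M+M ≤ ℓ*M := by
    intro k hk
    have e1 : (k+1)*M = k*M+M := by ring
    have := Nat.mul_le_mul_right M (show k+1 ≤ ℓ by omega)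
    omega
  have hHm : ∀ k, k < ℓ → ∀ j, j < M →
      BGMRES.Hm p M ℓ F (k*M+j) = (F k j)ᴴ * F k j := by
    intro k hk j hj
    rw [BGMRES.Hm, if_pos (hMl k hk j hj), BGMRES.div_helper k j hj, BGMRES.mod_helper k j hj]
  have hHm0 : ∀ t, ℓ*M ≤ t → BGMRES.Hm p M ℓ F t = 0 := by
    intro t ht
    rw [BGMRES.Hm, if_neg (by omega)]
  have hFdet : IsUnit (F (ℓ-1) (M-1)).det := by
    have htriang : (F (ℓ-1) (M-1)).BlockTriangular id := by
      intro a b hab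
      exact hFtri (ℓ-1) (by omega) (M-1) (by omega) a b hab
    rw [Matrix.det_of_upperTriangular htriang, isUnit_iff_ne_zero, Finset.prod_ne_zero_iff]
    intro a _
    obtain ⟨hre, _⟩ := hFpos (ℓ-1) (by omega) (M-1) (by omega) a
    intro h
    rw [h] at hre
    simp at hre
  -- positive semidefiniteness of the decrements
  have hD : ∀ t, t < ℓ*M → (BGMRES.Hm p M ℓ F t - BGMRES.Hm p M ℓ F (t+1)).PosSemidef := by
    intro t ht
    have hk : t/M < ℓ := by
      rw [Nat.div_lt_iff_lt_mul (by omega : 0 < M)]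
      exact ht
    have hj : t%M < M := Nat.mod_lt t (by omega)
    have e : t/M*M + t%M = t := by rw [mul_comm]; exact Nat.div_add_mod t M
    set k := t/M with hkdef
    set j := t%M with hjdef
    rw [← e, hHm k hk j hj]
    by_cases hj1 : j+1 < M
    · have e2 : k*M+j+1 = k*M+(j+1) := by omega
      rw [e2, hHm k hk (j+1) hj1]
      exact hmono k hk j hj1
    · have hjM : j = M-1 := by omega
      by_cases hk1 : k+1 < ℓ
      · have e3 : (k+1)*M = k*M+M := by ring
        have e2 : k*M+j+1 = (k+1)*M+0 := by omega
        rw [e2, hHm (k+1) hk1 0 (by omega), hjM]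
        exact (htrans k hk1).posSemidef
      · have e3 : (k+1)*M = k*M+M := by ring
        have hkl : k+1 = ℓ := by omega
        have e4 : ℓ*M = k*M+M := by rw [← hkl]; exact e3
        have h0 : BGMRES.Hm p M ℓ F (k*M+j+1) = 0 := hHm0 _ (by omega)
        rw [h0, sub_zero]
        exact Matrix.posSemidef_conjTranspose_mul_self _
  -- positive definiteness at cycle ends
  have hPD : ∀ t, t < ℓ*M → t % M = M-1 →
      (BGMRES.Hm p M ℓ F t - BGMRES.Hm p M ℓ F (t+1)).PosDef := by
    intro t ht hmod
    have hk : t/M < ℓ := by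
      rw [Nat.div_lt_iff_lt_mul (by omega : 0 < M)]
      exact ht
    have hj : t%M < M := Nat.mod_lt t (by omega)
    have e : t/M*M + t%M = t := by rw [mul_comm]; exact Nat.div_add_mod t M
    set k := t/M with hkdef
    set j := t%M with hjdef
    have hjM : j = M-1 := hmod
    rw [← e, hHm k hk j hj]
    by_cases hk1 : k+1 < ℓ
    · have e3 : (k+1)*M = k*M+M := by ring
      have e2 : k*M+j+1 = (k+1)*M+0 := by omega
      rw [e2, hHm (k+1) hk1 0 (by omega), hjM]
      exact htrans k hk1
    · have e3 : (k+1)*M = k*M+M := by ring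
      have hkl : k+1 = ℓ := by omega
      have e4 : ℓ*M = k*M+M := by rw [← hkl]; exact e3
      have h0 : BGMRES.Hm p M ℓ F (k*M+j+1) = 0 := hHm0 _ (by omega)
      rw [h0, sub_zero]
      have hkeq : k = ℓ-1 := by omega
      rw [hkeq, hjM]
      apply BGMRES.posDef_of_posSemidef_isUnit_det (Matrix.posSemidef_conjTranspose_mul_self _)
      rw [Matrix.det_mul, Matrix.det_conjTranspose]
      exact (hFdet.star).mul hFdet
  have hGu : ∀ t, t < ℓ*M → t % M = M-1 → IsUnit (BGMRES.Gm p M ℓ F t).det := by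
    intro t ht hmod
    have hpd := hPD t ht hmod
    have hsq : BGMRES.Gm p M ℓ F t * BGMRES.Gm p M ℓ F t
        = BGMRES.Hm p M ℓ F t - BGMRES.Hm p M ℓ F (t+1) := by
      rw [BGMRES.Gm]
      exact BGMRES.psqrt_mul_self hpd.posSemidef
    have hu : IsUnit ((BGMRES.Hm p M ℓ F t - BGMRES.Hm p M ℓ F (t+1)).det) :=
      (Matrix.isUnit_iff_isUnit_det _).mp hpd.isUnit
    rw [← hsq, Matrix.det_mul] at hu
    exact isUnit_of_mul_isUnit_left hu
  set A : Matrix (Fin (ℓ*M*p)) (Fin (ℓ*M*p)) ℂ := BGMRES.Amat p M ℓ F with hA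
  set Rfn : ℕ → Matrix (Fin (ℓ*M*p)) (Fin p) ℂ := BGMRES.Rf p M ℓ F with hRfn
  have hRf0 : ∀ k, ℓ ≤ k → Rfn (k*M) = 0 := by
    intro k hk
    rw [hRfn, BGMRES.Rf, Finset.Ico_eq_empty, Finset.sum_empty]
    have := Nat.mul_le_mul_right M hk
    omega
  -- the residual function
  set R : ℕ → ℕ → Matrix (Fin (ℓ*M*p)) (Fin p) ℂ := fun k j =>
    if k < ℓ then
      (if j ≤ M then Rfn (k*M+j)
       else Classical.choose (BGMRES.exists_residual A (Rfn (k*M)) j))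
    else 0 with hRdef
  refine ⟨A, Rfn 0, R, fun k => Rfn (k*M), by norm_num, ?_, ?_, ?_⟩
  · -- the GMRES residual property
    intro k j
    beta_reduce
    by_cases hk : k < ℓ
    · by_cases hj : j ≤ M
      · have hRkj : R k j = Rfn (k*M+j) := by rw [hRdef]; simp [hk, hj]
        rw [hRkj]
        apply BGMRES.isBlockGMRESResidual_of_orth A (Rfn (k*M)) (Rfn (k*M+j)) j
          (Submodule.span ℂ {v | ∃ t, k*M ≤ t ∧ t < k*M+j ∧
            ∃ c : Fin p, v = fun r => EB p (ℓ*M*p) t r c})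
        · -- existence of X
          refine ⟨∑ i ∈ Finset.range j, (A^i * Rfn (k*M)) * BGMRES.Gm p M ℓ F (k*M+i),
            ?_, ?_⟩
          · intro c
            apply BGMRES.col_sum_mem
            intro i hi
            apply BGMRES.col_mul_mem
            intro d
            exact Submodule.subset_span ⟨i, Finset.mem_range.mp hi, d, rfl⟩
          · have hAX : A * (∑ i ∈ Finset.range j,
                (A^i * Rfn (k*M)) * BGMRES.Gm p M ℓ F (k*M+i))
                = ∑ i ∈ Finset.range j,
                    EB p (ℓ*M*p) (k*M+i) * BGMRES.Gm p M ℓ F (k*M+i) := by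
              rw [Matrix.mul_sum]
              refine Finset.sum_congr rfl fun i hi => ?_
              have hi' := Finset.mem_range.mp hi
              rw [← Matrix.mul_assoc, ← Matrix.mul_assoc, ← pow_succ']
              congr 1
              have := BGMRES.A_pow p M ℓ F hM hGu k hk (i+1) (by omega) (by omega)
              simpa using this
            have hsplit : (∑ i ∈ Finset.range j,
                EB p (ℓ*M*p) (k*M+i) * BGMRES.Gm p M ℓ F (k*M+i)) + Rfn (k*M+j)
                = Rfn (k*M) := by
              rw [hRfn, BGMRES.Rf, BGMRES.Rf,
                ← Finset.sum_Ico_consecutive _ (show k*M ≤ k*M+j by omega)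
                  (show k*M+j ≤ ℓ*M by have := hMl' k hk; omega)]
              congr 1
              rw [Finset.sum_Ico_eq_sum_range]
              have e5 : k*M+j-(k*M) = j := by omega
              rw [e5]
            rw [hAX, ← hsplit]
            abel
        · -- image of Krylov space in U
          intro v hv
          refine Submodule.span_induction ?_ ?_ ?_ ?_ hv
          · rintro x ⟨i, hi, c, rfl⟩
            rw [← BGMRES.col_mul]
            have hpow : A * ((A^i) * Rfn (k*M)) = EB p (ℓ*M*p) (k*M+i) := by
              rw [← Matrix.mul_assoc, ← pow_succ']
              have := BGMRES.A_pow p M ℓ F hM hGu k hk (i+1) (by omega) (by omega)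
              simpa using this
            rw [hpow]
            exact Submodule.subset_span ⟨k*M+i, by omega, by omega, c, rfl⟩
          · rw [Matrix.mulVec_zero]
            exact Submodule.zero_mem _
          · intro x y _ _ hx' hy'
            rw [Matrix.mulVec_add]
            exact Submodule.add_mem _ hx' hy'
          · intro a x _ hx'
            rw [Matrix.mulVec_smul]
            exact Submodule.smul_mem _ a hx'
        · -- orthogonality
          intro c u hu
          refine Submodule.span_induction ?_ ?_ ?_ ?_ hu
          · rintro x ⟨t, ht1, ht2, d, rfl⟩
            have h0 : (EB p (ℓ*M*p) t)ᴴ * Rfn (k*M+j) = 0 :=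
              BGMRES.EBH_Rf p M ℓ F t (k*M+j) ht2
            have h1 : ((EB p (ℓ*M*p) t)ᴴ * Rfn (k*M+j)) d c
                = ∑ r, (starRingEnd ℂ) (EB p (ℓ*M*p) t r d) * Rfn (k*M+j) r c := by
              simp [Matrix.mul_apply, Matrix.conjTranspose_apply]
            calc ∑ r, (starRingEnd ℂ) (Rfn (k*M+j) r c) * EB p (ℓ*M*p) t r d
                = (starRingEnd ℂ) (((EB p (ℓ*M*p) t)ᴴ * Rfn (k*M+j)) d c) := by
                  rw [h1, map_sum]
                  refine Finset.sum_congr rfl fun r _ => ?_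
                  simp [mul_comm]
              _ = 0 := by rw [h0]; simp
          · simp
          · intro x y _ _ hx' hy'
            have : ∀ r, (starRingEnd ℂ) (Rfn (k*M+j) r c) * (x+y) r
                = (starRingEnd ℂ) (Rfn (k*M+j) r c) * x r
                  + (starRingEnd ℂ) (Rfn (k*M+j) r c) * y r := by
              intro r
              simp [mul_add]
            rw [Finset.sum_congr rfl (fun r _ => this r), Finset.sum_add_distrib, hx', hy',
              add_zero]
          · intro a x _ hx'
            have : ∀ r, (starRingEnd ℂ) (Rfn (k*M+j) r c) * (a • x) r
                = a * ((starRingEnd ℂ) (Rfn (k*M+j) r c) * x r) := by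
              intro r
              simp [smul_eq_mul]
              ring
            rw [Finset.sum_congr rfl (fun r _ => this r), ← Finset.mul_sum, hx', mul_zero]
      · have hRkj : R k j
            = Classical.choose (BGMRES.exists_residual A (Rfn (k*M)) j) := by
          rw [hRdef]; simp [hk, hj]
        rw [hRkj]
        exact Classical.choose_spec (BGMRES.exists_residual A (Rfn (k*M)) j)
    · have hRkj : R k j = 0 := by rw [hRdef]; simp [hk]
      rw [hRkj, hRf0 k (by omega)]
      constructor
      · refine ⟨0, fun c => Submodule.zero_mem _, by simp⟩
      · intro X' _
        have h0 : frobNorm (0 : Matrix (Fin (ℓ*M*p)) (Fin p) ℂ) = 0 := by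
          simp [frobNorm]
        rw [h0]
        exact Real.sqrt_nonneg _
  · -- restart identity
    intro k
    beta_reduce
    by_cases hk : k < ℓ
    · have hRkM : R k M = Rfn (k*M+M) := by rw [hRdef]; simp [hk]
      rw [hRkM]
      congr 1
      ring
    · have hRkM : R k M = 0 := by rw [hRdef]; simp [hk]
      rw [hRkM, hRf0 (k+1) (by omega)]
  · -- the Gram matrices
    intro k hk j hj
    have hRkj : R k j = Rfn (k*M+j) := by rw [hRdef]; simp [hk, show j ≤ M by omega]
    rw [hRkj, hRfn]
    rw [BGMRES.Gram p M ℓ F hD (ℓ*M) (k*M+j) (by omega), hHm k hk j hj]
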